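/- Let 1 ≤ p < ∞. The function I_p is strictly decreasing on the interval (0, e^{m_p}) and strictly increasing on the interval (e^{m_p}, 1). -/

import Mathlib

open Filter Set

noncomputable section

/-- The digamma function `ψ = Γ'/Γ`. -/
def digammaFn (x : ℝ) : ℝ := deriv Real.Gamma x / Real.Gamma x

/-- `H(x) = ψ(x) - log x`. -/
def Hfun (x : ℝ) : ℝ := digammaFn x - Real.log x

/-- The inverse `H⁻¹` of the increasing bijection `H : (0,∞) → (-∞,0)`. -/
def Hinv (y : ℝ) : ℝ := Function.invFunOn Hfun (Ioi 0) y

/-- The constant `m_p = (1/p)(ψ(1/p) + log p)`. -/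
def mConst (p : ℝ) : ℝ := (1/p) * (digammaFn (1/p) + Real.log p)

/-- `G_p(θ) = H⁻¹(p log θ)`. -/
def Gfun (p θ : ℝ) : ℝ := Hinv (p * Real.log θ)

/-- The rate function
`I_p(θ) = [p G_p(θ) - 1] log θ + G_p(θ)[log G_p(θ) - 1] - log Γ(G_p(θ))
            + (1/p)(1 + log p) + log Γ(1/p)`. -/
def ratefn (p θ : ℝ) : ℝ :=
  (p * Gfun p θ - 1) * Real.log θ + Gfun p θ * (Real.log (Gfun p θ) - 1)
    - Real.log (Real.Gamma (Gfun p θ)) + (1/p) * (1 + Real.log p)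
    + Real.log (Real.Gamma (1/p))

open Real Topology

/-!
Convexity of `log Γ` gives `ψ x ≤ log x ≤ ψ (x + 1)`, hence `-1/x ≤ H x ≤ 0`, and
`ψ (x + 1) = ψ x + 1/x` makes the increment `H (x + 1) - H x = 1/x - log (x + 1) + log x`
strictly decreasing in `x`. Since `H (x + n) → 0`, telescoping shows that `H` is strictly
increasing. As `H` is the derivative of `log Γ x - (x log x - x)` and tends to `-∞` at `0⁺`
and to `0` at `∞`, Darboux's theorem shows that it maps `(0, ∞)` onto `(-∞, 0)`.

With `g = G_p(θ)`, so that `p log θ = H g`, the rate function becomes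
`I_p(θ) = (g - 1/p) H g - (log Γ g - (g log g - g)) + const`. By the mean value theorem its
increment between `g₁ < g₂` is `(g₂ - 1/p)(H g₂ - H ξ) + (g₁ - 1/p)(H ξ - H g₁)` for some
`ξ ∈ (g₁, g₂)`, which is negative for `g₂ ≤ 1/p` and positive for `g₁ ≥ 1/p`. Finally
`G_p` is increasing and `H (1/p) = p m_p`, so `G_p(e^{m_p}) = 1/p`.
-/

lemma differentiableAt_Gamma_of_pos {x : ℝ} (hx : 0 < x) : DifferentiableAt ℝ Gamma x :=
  differentiableAt_Gamma fun m => ((neg_nonpos.mpr m.cast_nonneg).trans_lt hx).ne'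

lemma hasDerivAt_log_Gamma {x : ℝ} (hx : 0 < x) :
    HasDerivAt (log ∘ Gamma) (digammaFn x) x :=
  (differentiableAt_Gamma_of_pos hx).hasDerivAt.log (Gamma_pos_of_pos hx).ne'

lemma log_Gamma_add_one {x : ℝ} (hx : 0 < x) :
    log (Gamma (x + 1)) = log (Gamma x) + log x := by
  rw [Gamma_add_one hx.ne', log_mul hx.ne' (Gamma_pos_of_pos hx).ne', add_comm]

lemma digammaFn_add_one {x : ℝ} (hx : 0 < x) : digammaFn (x + 1) = digammaFn x + x⁻¹ := by
  have hshift : HasDerivAt (fun y => log (Gamma (y + 1))) (digammaFn (x + 1)) x :=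
    (hasDerivAt_log_Gamma (by linarith)).comp_add_const x 1
  have hsum : HasDerivAt (fun y => log (Gamma y) + log y) (digammaFn x + x⁻¹) x :=
    (hasDerivAt_log_Gamma hx).add (hasDerivAt_log hx.ne')
  refine hshift.unique (hsum.congr_of_eventuallyEq ?_)
  filter_upwards [eventually_gt_nhds hx] with y hy using log_Gamma_add_one hy

lemma slope_log_Gamma_add_one {x : ℝ} (hx : 0 < x) :
    slope (log ∘ Gamma) x (x + 1) = log x := by
  rw [slope_def_field, Function.comp_apply, Function.comp_apply, log_Gamma_add_one hx]
  ring

lemma digammaFn_le_log {x : ℝ} (hx : 0 < x) : digammaFn x ≤ log x :=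
  slope_log_Gamma_add_one hx ▸ convexOn_log_Gamma.le_slope_of_hasDerivAt hx
    (by linarith : (0 : ℝ) < x + 1) (lt_add_one x) (hasDerivAt_log_Gamma hx)

lemma log_le_digammaFn_add_one {x : ℝ} (hx : 0 < x) : log x ≤ digammaFn (x + 1) :=
  slope_log_Gamma_add_one hx ▸ convexOn_log_Gamma.slope_le_of_hasDerivAt hx
    (by linarith : (0 : ℝ) < x + 1) (lt_add_one x) (hasDerivAt_log_Gamma (by linarith))

lemma Hfun_nonpos {x : ℝ} (hx : 0 < x) : Hfun x ≤ 0 :=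
  sub_nonpos.mpr (digammaFn_le_log hx)

lemma neg_inv_le_Hfun {x : ℝ} (hx : 0 < x) : -x⁻¹ ≤ Hfun x := by
  have := log_le_digammaFn_add_one hx
  rw [digammaFn_add_one hx] at this
  rw [Hfun]
  linarith

def HfunStep (t : ℝ) : ℝ := t⁻¹ - log (t + 1) + log t

lemma Hfun_add_one {x : ℝ} (hx : 0 < x) : Hfun (x + 1) = Hfun x + HfunStep x := by
  rw [Hfun, Hfun, HfunStep, digammaFn_add_one hx]
  ring

lemma hasDerivAt_HfunStep {t : ℝ} (ht : 0 < t) :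
    HasDerivAt HfunStep (-(t ^ 2 * (t + 1))⁻¹) t := by
  have h : HasDerivAt (fun t => t⁻¹ - log (t + 1) + log t)
      (-(t ^ 2)⁻¹ - (t + 1)⁻¹ + t⁻¹) t :=
    ((hasDerivAt_inv ht.ne').sub
      ((hasDerivAt_log (by linarith : t + 1 ≠ 0)).comp_add_const t 1)).add (hasDerivAt_log ht.ne')
  refine h.congr_deriv ?_
  field_simp
  ring

lemma HfunStep_strictAntiOn : StrictAntiOn HfunStep (Ioi 0) := by
  refine strictAntiOn_of_deriv_neg (convex_Ioi 0)
    (fun t ht => (hasDerivAt_HfunStep ht).continuousAt.continuousWithinAt) fun t ht => ?_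
  rw [interior_Ioi] at ht
  rw [(hasDerivAt_HfunStep ht).deriv, neg_neg_iff_pos]
  have : (0 : ℝ) < t := ht
  positivity

lemma tendsto_Hfun_atTop : Tendsto Hfun atTop (𝓝 0) := by
  have hlow : Tendsto (fun x : ℝ => -x⁻¹) atTop (𝓝 0) := by
    simpa using (tendsto_inv_atTop_zero (𝕜 := ℝ)).neg
  refine tendsto_of_tendsto_of_tendsto_of_le_of_le' hlow tendsto_const_nhds ?_ ?_ <;>
    filter_upwards [eventually_gt_atTop 0] with x hx
  exacts [neg_inv_le_Hfun hx, Hfun_nonpos hx]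

lemma Hfun_strictMonoOn : StrictMonoOn Hfun (Ioi 0) := by
  intro x (hx : 0 < x) y (hy : 0 < y) hxy
  set gap : ℕ → ℝ := fun n => Hfun (y + n) - Hfun (x + n) with hgap
  have hgap_succ (n : ℕ) : gap (n + 1) = gap n - (HfunStep (x + n) - HfunStep (y + n)) := by
    simp only [hgap, Nat.cast_succ, ← add_assoc]
    rw [Hfun_add_one (by positivity), Hfun_add_one (by positivity)]
    ring
  have hanti : Antitone gap := antitone_nat_of_succ_le fun n => by
    rw [hgap_succ n, sub_le_self_iff, sub_nonneg]
    exact HfunStep_strictAntiOn.antitoneOn (by positivity : (0 : ℝ) < x + n)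
      (by positivity : (0 : ℝ) < y + n) (by linarith)
  have hlim : Tendsto gap atTop (𝓝 0) := by
    have hshift (z : ℝ) : Tendsto (fun n : ℕ => Hfun (z + n)) atTop (𝓝 0) :=
      tendsto_Hfun_atTop.comp (tendsto_atTop_add_const_left _ z tendsto_natCast_atTop_atTop)
    simpa using (hshift y).sub (hshift x)
  have hgap1 := hanti.le_of_tendsto hlim 1
  rw [← zero_add 1, hgap_succ] at hgap1
  simp only [hgap, Nat.cast_zero, add_zero] at hgap1
  have hstep := HfunStep_strictAntiOn hx hy hxy
  linarith

lemma Hfun_neg {x : ℝ} (hx : 0 < x) : Hfun x < 0 :=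
  (Hfun_strictMonoOn hx (by linarith : (0 : ℝ) < x + 1) (lt_add_one x)).trans_le
    (Hfun_nonpos (by linarith))

lemma Hfun_lt_log_two_sub {x : ℝ} (hx : 0 < x) : Hfun x < log 2 - (2 * x)⁻¹ := by
  have hψ := digammaFn_le_log (by linarith : 0 < x + 1)
  rw [digammaFn_add_one hx] at hψ
  have hz : 0 < (x + 1) / (2 * x) := by positivity
  have hlog : log (x + 1) = log 2 + log x + log ((x + 1) / (2 * x)) := by
    rw [← log_mul two_ne_zero hx.ne', ← log_mul (by positivity) hz.ne']
    congr 1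
    field_simp
  have hz1 : (x + 1) / (2 * x) - 1 = (2 * x)⁻¹ - 2⁻¹ := by
    field_simp
    ring
  have hinv : x⁻¹ = 2 * (2 * x)⁻¹ := by
    field_simp
  have := log_le_sub_one_of_pos hz
  rw [Hfun]
  linarith

lemma tendsto_Hfun_nhdsGT_zero : Tendsto Hfun (𝓝[>] 0) atBot := by
  have hbound : Tendsto (fun x : ℝ => log 2 - (2 * x)⁻¹) (𝓝[>] 0) atBot := by
    have : Tendsto (fun x : ℝ => 2⁻¹ * x⁻¹) (𝓝[>] 0) atTop :=
      tendsto_inv_nhdsGT_zero.const_mul_atTop (by norm_num)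
    simpa [mul_inv, mul_comm, sub_eq_add_neg] using
      tendsto_atBot_add_const_left _ (log 2) (tendsto_neg_atTop_atBot.comp this)
  refine tendsto_atBot_mono' _ ?_ hbound
  filter_upwards [self_mem_nhdsWithin] with x hx using (Hfun_lt_log_two_sub hx).le

def logGammaSubStirling (x : ℝ) : ℝ := log (Gamma x) - (x * log x - x)

lemma hasDerivAt_logGammaSubStirling {x : ℝ} (hx : 0 < x) :
    HasDerivAt logGammaSubStirling (Hfun x) x := by
  have h : HasDerivAt (fun y => log (Gamma y) - (y * log y - y))
      (digammaFn x - (1 * log x + x * x⁻¹ - 1)) x :=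
    (hasDerivAt_log_Gamma hx).sub (((hasDerivAt_id x).mul (hasDerivAt_log hx.ne')).sub
      (hasDerivAt_id x))
  refine h.congr_deriv ?_
  rw [Hfun, mul_inv_cancel₀ hx.ne']
  ring

lemma Hfun_surjOn : SurjOn Hfun (Ioi 0) (Iio 0) := by
  intro y (hy : y < 0)
  obtain ⟨a, hay, ha⟩ :=
    ((tendsto_Hfun_nhdsGT_zero.eventually (eventually_lt_atBot y)).and self_mem_nhdsWithin).exists
  obtain ⟨b, hyb, hb⟩ :=
    ((tendsto_Hfun_atTop.eventually (lt_mem_nhds hy)).and (eventually_gt_atTop 0)).exists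
  have hab : a < b := (Hfun_strictMonoOn.lt_iff_lt ha hb).1 (hay.trans hyb)
  obtain ⟨c, hc, rfl⟩ := exists_hasDerivWithinAt_eq_of_gt_of_lt hab.le
    (fun x hx => (hasDerivAt_logGammaSubStirling (ha.trans_le hx.1)).hasDerivWithinAt) hay hyb
  exact ⟨c, (mem_Ioi.1 ha).trans hc.1, rfl⟩

lemma Hinv_pos {y : ℝ} (hy : y < 0) : 0 < Hinv y :=
  Function.invFunOn_mem (Hfun_surjOn hy)

lemma Hfun_Hinv {y : ℝ} (hy : y < 0) : Hfun (Hinv y) = y :=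
  Function.invFunOn_eq (Hfun_surjOn hy)

lemma Hinv_Hfun {x : ℝ} (hx : 0 < x) : Hinv (Hfun x) = x :=
  Hfun_strictMonoOn.injOn.leftInvOn_invFunOn hx

lemma Hinv_strictMonoOn : StrictMonoOn Hinv (Iio 0) := fun y₁ h₁ y₂ h₂ h₁₂ =>
  (Hfun_strictMonoOn.lt_iff_lt (Hinv_pos h₁) (Hinv_pos h₂)).1
    (by rwa [Hfun_Hinv h₁, Hfun_Hinv h₂])

section Gfun

variable {p : ℝ}

lemma Hfun_one_div (hp : p ≠ 0) : Hfun (1 / p) = p * mConst p := by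
  rw [mConst, Hfun, one_div, log_inv]
  field_simp
  ring

lemma mConst_neg (hp : 0 < p) : mConst p < 0 :=
  neg_of_mul_neg_right (Hfun_one_div hp.ne' ▸ Hfun_neg (by positivity)) hp.le

lemma mul_log_neg_of_mem_Ioo (hp : 0 < p) {θ : ℝ} (hθ : θ ∈ Ioo 0 1) : p * log θ < 0 :=
  mul_neg_of_pos_of_neg hp (log_neg hθ.1 hθ.2)

lemma Gfun_pos (hp : 0 < p) {θ : ℝ} (hθ : θ ∈ Ioo 0 1) : 0 < Gfun p θ :=
  Hinv_pos (mul_log_neg_of_mem_Ioo hp hθ)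

lemma Gfun_strictMonoOn (hp : 0 < p) : StrictMonoOn (Gfun p) (Ioo 0 1) :=
  Hinv_strictMonoOn.comp
    (fun _ h₁ _ _ h₁₂ => mul_lt_mul_of_pos_left (log_lt_log h₁.1 h₁₂) hp)
    fun _ hθ => mul_log_neg_of_mem_Ioo hp hθ

lemma Gfun_exp_mConst (hp : 0 < p) : Gfun p (exp (mConst p)) = 1 / p := by
  rw [Gfun, log_exp, ← Hfun_one_div hp.ne', Hinv_Hfun (by positivity)]

end Gfun

section rateOfG

variable {p : ℝ}

def rateOfG (p g : ℝ) : ℝ :=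
  (g - 1 / p) * Hfun g - logGammaSubStirling g + ((1 / p) * (1 + log p) + log (Gamma (1 / p)))

lemma ratefn_eq_rateOfG (hp : 0 < p) {θ : ℝ} (hθ : θ ∈ Ioo 0 1) :
    ratefn p θ = rateOfG p (Gfun p θ) := by
  have hH : Hfun (Gfun p θ) = p * log θ := Hfun_Hinv (mul_log_neg_of_mem_Ioo hp hθ)
  rw [ratefn, rateOfG, hH, logGammaSubStirling]
  field_simp
  ring

lemma exists_rateOfG_sub_eq {g₁ g₂ : ℝ} (h₁ : 0 < g₁) (h₁₂ : g₁ < g₂) :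
    ∃ ξ ∈ Ioo g₁ g₂, rateOfG p g₂ - rateOfG p g₁ =
      (g₂ - 1 / p) * (Hfun g₂ - Hfun ξ) + (g₁ - 1 / p) * (Hfun ξ - Hfun g₁) := by
  obtain ⟨ξ, hξ, hslope⟩ := exists_hasDerivAt_eq_slope logGammaSubStirling Hfun h₁₂
    (fun x hx =>
      (hasDerivAt_logGammaSubStirling (h₁.trans_le hx.1)).continuousAt.continuousWithinAt)
    (fun x hx => hasDerivAt_logGammaSubStirling (h₁.trans hx.1))
  refine ⟨ξ, hξ, ?_⟩
  have hmvt : logGammaSubStirling g₂ - logGammaSubStirling g₁ = Hfun ξ * (g₂ - g₁) := by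
    rw [hslope, div_mul_cancel₀ _ (sub_ne_zero.2 h₁₂.ne')]
  simp only [rateOfG]
  linear_combination -hmvt

lemma rateOfG_strictAntiOn (p : ℝ) : StrictAntiOn (rateOfG p) (Ioc 0 (1 / p)) := by
  intro g₁ hg₁ g₂ hg₂ h₁₂
  obtain ⟨ξ, hξ, heq⟩ := exists_rateOfG_sub_eq (p := p) hg₁.1 h₁₂
  have hH₁ := Hfun_strictMonoOn hg₁.1 (hg₁.1.trans hξ.1) hξ.1
  have hH₂ := Hfun_strictMonoOn (hg₁.1.trans hξ.1) (hg₁.1.trans h₁₂) hξ.2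
  nlinarith [hg₁.2, hg₂.2]

lemma rateOfG_strictMonoOn (hp : 0 < p) : StrictMonoOn (rateOfG p) (Ici (1 / p)) := by
  intro g₁ (hg₁ : 1 / p ≤ g₁) g₂ (hg₂ : 1 / p ≤ g₂) h₁₂
  have hpos : 0 < g₁ := (one_div_pos.2 hp).trans_le hg₁
  obtain ⟨ξ, hξ, heq⟩ := exists_rateOfG_sub_eq (p := p) hpos h₁₂
  have hH₁ := Hfun_strictMonoOn hpos (hpos.trans hξ.1) hξ.1
  have hH₂ := Hfun_strictMonoOn (hpos.trans hξ.1) (hpos.trans h₁₂) hξ.2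
  nlinarith

end rateOfG

/-- `I_p` is strictly decreasing on `(0, e^{m_p})` and strictly increasing
on `(e^{m_p}, 1)`. -/
theorem statement17 (p : ℝ) (hp : 1 ≤ p) :
    StrictAntiOn (ratefn p) (Ioo 0 (Real.exp (mConst p))) ∧
    StrictMonoOn (ratefn p) (Ioo (Real.exp (mConst p)) 1) := by
  have hp0 : 0 < p := by linarith
  have hm : exp (mConst p) ∈ Ioo 0 1 := ⟨exp_pos _, exp_lt_one_iff.2 (mConst_neg hp0)⟩
  have hG := Gfun_strictMonoOn hp0
  have hrate : EqOn (rateOfG p ∘ Gfun p) (ratefn p) (Ioo 0 1) :=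
    fun θ hθ => (ratefn_eq_rateOfG hp0 hθ).symm
  have hlow : Ioo 0 (exp (mConst p)) ⊆ Ioo 0 1 := Ioo_subset_Ioo_right hm.2.le
  have hhigh : Ioo (exp (mConst p)) 1 ⊆ Ioo 0 1 := Ioo_subset_Ioo_left hm.1.le
  constructor
  · refine ((rateOfG_strictAntiOn p).comp_strictMonoOn (hG.mono hlow) fun θ hθ =>
      ⟨Gfun_pos hp0 (hlow hθ), ?_⟩).congr (hrate.mono hlow)
    rw [← Gfun_exp_mConst hp0]
    exact (hG (hlow hθ) hm hθ.2).le
  · refine ((rateOfG_strictMonoOn hp0).comp (hG.mono hhigh) fun θ hθ => ?_).congr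
      (hrate.mono hhigh)
    rw [mem_Ici, ← Gfun_exp_mConst hp0]
    exact (hG hm (hhigh hθ) hθ.1).le
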